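/- arXiv:1909.00556 — 2 statements merged into one kernel-verified Lean document; each statement's English description precedes it below -/
import Mathlib

section
/- Let B and C be back-off n-gram language models over the same vocabulary V, and suppose Ngram_C ⊆ Ngram_B. Let A be the back-off n-gram language model over V determined by: Ngram_A = Ngram_B; for each entry H·w ∈ Ngram_B, the stored log-probability of A is s_A(H·w) = log P_B(w | H) − log P_C(w | H) (where log P_C(w | H) is the back-off-computed value of C, which may involve backing off when H·w ∉ Ngram_C); and for each history H, the back-off coefficient of A is α_A(H) = α_B(H) − α_C(H) (where α_C(H) = 0 whenever H is not a history occurring in Ngram_C). Then for every history H (a finite list over V) and every word w ∈ V, log P_A(w | H) = log P_B(w | H) − log P_C(w | H); that is, A is a difference language model (DLM) of B and C. -/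
open Classical

/-- A back-off n-gram language model over a vocabulary `V`:
a set of n-gram entries (nonempty lists over `V`, containing all unigrams),
a stored log-probability for each entry, and a back-off coefficient for each
history which vanishes for histories not occurring in the entry set. -/
structure BackoffLM (V : Type*) where
  /-- the set of n-gram entries -/
  Ngram : Set (List V)
  /-- every unigram is an entry -/
  unigram_mem : ∀ w : V, [w] ∈ Ngram
  /-- stored log-probability (only its values on entries of `Ngram` matter) -/
  s : List V → ℝ
  /-- back-off coefficient of a history -/
  α : List V → ℝ
  /-- the back-off coefficient is zero for histories not occurring in `Ngram` -/
  α_eq_zero : ∀ H : List V, (∀ w : V, H ++ [w] ∉ Ngram) → α H = 0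

/-- The back-off-computed log-probability `log P_M(w | H)`, by recursion on the
length of the history `H`: if `H·w` is an entry, it is the stored value;
otherwise it is `α(H)` plus the value for the history with its first element
dropped (for the empty history it is the stored unigram value). -/

noncomputable def BackoffLM.logP {V : Type*} (M : BackoffLM V) : List V → V → ℝ
  | [], w => M.s [w]
  | (h :: t), w =>
    if (h :: t) ++ [w] ∈ M.Ngram then M.s ((h :: t) ++ [w])
    else M.α (h :: t) + M.logP t w

/-- Paper's Theorem 2: if `Ngram_C ⊆ Ngram_B`, `Ngram_A = Ngram_B`, the stored
log-probabilities of `A` on entries of `Ngram_B` are the differences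
`log P_B(w|H) − log P_C(w|H)`, and the back-off coefficients of `A` are the
differences `α_B(H) − α_C(H)`, then `A` is a difference language model of `B`
and `C`: for every history `H` and word `w`,
`log P_A(w|H) = log P_B(w|H) − log P_C(w|H)`. -/
theorem dlm_is_difference_language_model
    {V : Type*} (A B C : BackoffLM V)
    (hCB : C.Ngram ⊆ B.Ngram)
    (hAB : A.Ngram = B.Ngram)
    (hs : ∀ (H : List V) (w : V), H ++ [w] ∈ B.Ngram →
      A.s (H ++ [w]) = B.logP H w - C.logP H w)
    (hα : ∀ H : List V, A.α H = B.α H - C.α H) :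
    ∀ (H : List V) (w : V), A.logP H w = B.logP H w - C.logP H w := by
  intro H
  induction H with
  | nil =>
    intro w
    have := hs [] w (B.unigram_mem w)
    simpa [BackoffLM.logP] using this
  | cons h t ih =>
    intro w
    by_cases hb : (h :: t) ++ [w] ∈ B.Ngram
    · have ha : (h :: t) ++ [w] ∈ A.Ngram := by rw [hAB]; exact hb
      simp only [BackoffLM.logP, if_pos ha]
      exact hs (h :: t) w hb
    · have ha : (h :: t) ++ [w] ∉ A.Ngram := by rw [hAB]; exact hb
      have hc : (h :: t) ++ [w] ∉ C.Ngram := fun h' => hb (hCB h')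
      simp only [BackoffLM.logP, if_neg ha, if_neg hb, if_neg hc, hα, ih w]
      ring
end

section
/- Let B and C be back-off n-gram language models over the same vocabulary V with Ngram_C ⊆ Ngram_B, and let A be a back-off n-gram language model with Ngram_A = Ngram_B whose back-off coefficients satisfy α_A(H) = α_B(H) − α_C(H) for every history H (with α_C(H) = 0 whenever H is not a history occurring in Ngram_C). Let l ≥ 1, suppose that log P_A(w | K) = log P_B(w | K) − log P_C(w | K) holds for every history K of length at most l − 1 and every word w ∈ V, and let H be a history of length l and w ∈ V a word such that H·w ∉ Ngram_B. Then log P_A(w | H) = log P_B(w | H) − log P_C(w | H). (This is the inductive step in the proof of the paper's Theorem 2: since H·w ∉ Ngram_B implies H·w ∉ Ngram_C, all three models back off at H·w, and the difference identity propagates from the shortened history H' together with α_A(H) = α_B(H) − α_C(H).) -/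
open Classical

/-- Inductive step in the proof of the paper's Theorem 2: if the difference
identity holds for all histories of length at most `l − 1`, and `H` has length
`l ≥ 1` with `H·w ∉ Ngram_B`, then all three models back off and the identity
holds for `H` as well. -/
theorem dlm_inductive_step
    {V : Type*} (A B C : BackoffLM V)
    (hCB : C.Ngram ⊆ B.Ngram)
    (hAB : A.Ngram = B.Ngram)
    (hα : ∀ H : List V, A.α H = B.α H - C.α H)
    (l : ℕ) (hl : 1 ≤ l)
    (ih : ∀ K : List V, K.length ≤ l - 1 →
      ∀ w : V, A.logP K w = B.logP K w - C.logP K w)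
    (H : List V) (hH : H.length = l) (w : V)
    (hnot : H ++ [w] ∉ B.Ngram) :
    A.logP H w = B.logP H w - C.logP H w := by
  match H with
  | [] => simp at hH; omega
  | (h :: t) =>
    have hnotC : (h :: t) ++ [w] ∉ C.Ngram := fun hc => hnot (hCB hc)
    have hnotA : (h :: t) ++ [w] ∉ A.Ngram := hAB ▸ hnot
    have ht : t.length ≤ l - 1 := by simp at hH; omega
    simp only [BackoffLM.logP, if_neg hnot, if_neg hnotC, if_neg hnotA,
      hα, ih t ht w]
    ring
end
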